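/- For any finite random variables X, Z (X with full support) there exists a maximally revealing attribute: there is a finite random variable S* with Markov chain S* − X − Z such that the Bayes inference gain satisfies log(Pr[S* = Ŝ*(Z)] / Pr[S* = Ŝ*]) = log(∑_z max_x P_{Z|X}(z|x)), i.e., S* achieves the maximal leakage L(X → Z). -/

import Mathlib

open scoped BigOperators
noncomputable section

/-- A joint pmf on a pair of finite alphabets. -/
def IsJointPMF2 {X Z : Type} [Fintype X] [Fintype Z] (p : X → Z → ℝ) : Prop :=
  (∀ x z, 0 ≤ p x z) ∧ ∑ x, ∑ z, p x z = 1

/-- A joint pmf on a triple of finite alphabets. -/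
def IsJointPMF3 {S X Z : Type} [Fintype S] [Fintype X] [Fintype Z] (q : S → X → Z → ℝ) : Prop :=
  (∀ s x z, 0 ≤ q s x z) ∧ ∑ s, ∑ x, ∑ z, q s x z = 1

/-- Markov chain S − X − Z: S and Z are conditionally independent given X. -/
def MarkovSXZ {S X Z : Type} [Fintype S] [Fintype Z] (q : S → X → Z → ℝ) : Prop :=
  ∀ s x z, q s x z * (∑ s', ∑ z', q s' x z') = (∑ z', q s x z') * (∑ s', q s' x z)

/-- Pr[S = Ŝ(Z)]: probability of the Bayes-optimal guess of S from Z
(supremum over all estimators g : Z → S). -/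
def bayesGuessProb {S Z : Type} [Fintype S] [Fintype Z] (q : S → Z → ℝ) : ℝ :=
  ⨆ g : Z → S, ∑ z, q (g z) z

/-- Pr[S = Ŝ]: probability of the Bayes-optimal constant guess of S. -/
def baselineProb {S Z : Type} [Fintype S] [Fintype Z] (q : S → Z → ℝ) : ℝ :=
  ⨆ s : S, ∑ z, q s z

/-- The inference gain I_∞(S; Z) = log₂(Pr[S = Ŝ(Z)] / Pr[S = Ŝ]). -/
def infGain {S Z : Type} [Fintype S] [Fintype Z] (q : S → Z → ℝ) : ℝ :=
  Real.logb 2 (bayesGuessProb q / baselineProb q)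

/-- Closed form of maximal leakage: log₂(∑_z max_x P_{Z|X}(z|x)).
(For x outside the support of P_X the conditional P_{Z|X}(·|x) is 0/0 = 0,
so the max over all x equals the max over the support of P_X.) -/
def maxLeak {X Z : Type} [Fintype X] [Fintype Z] [Nonempty X] (p : X → Z → ℝ) : ℝ :=
  Real.logb 2 (∑ z, Finset.univ.sup' Finset.univ_nonempty fun x => p x z / ∑ z', p x z')

lemma mySup'_comp_equiv {S T : Type} [Fintype S] [Fintype T] [Nonempty S] [Nonempty T]
    (e : S ≃ T) (f : T → ℝ) :
    (Finset.univ.sup' Finset.univ_nonempty fun s => f (e s))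
      = Finset.univ.sup' Finset.univ_nonempty f := by
  apply le_antisymm
  · exact Finset.sup'_le _ _ fun s _ => Finset.le_sup' f (Finset.mem_univ (e s))
  · refine Finset.sup'_le _ _ fun t _ => ?_
    have := Finset.le_sup' (fun s => f (e s)) (Finset.mem_univ (e.symm t))
    simp only [Equiv.apply_symm_apply] at this
    exact this

lemma bayesGuessProb_eq_sum_sup' {S Z : Type} [Fintype S] [Fintype Z] [Nonempty S]
    (q : S → Z → ℝ) :
    bayesGuessProb q = ∑ z, Finset.univ.sup' Finset.univ_nonempty fun s => q s z := by
  have hub : ∀ g : Z → S, ∑ z, q (g z) z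
      ≤ ∑ z, Finset.univ.sup' Finset.univ_nonempty fun s => q s z :=
    fun g => Finset.sum_le_sum fun z _ => Finset.le_sup' (fun s => q s z) (Finset.mem_univ (g z))
  apply le_antisymm
  · exact ciSup_le hub
  · choose g hg1 hg2 using fun z =>
      Finset.exists_mem_eq_sup' (Finset.univ_nonempty) (fun s => q s z)
    calc (∑ z, Finset.univ.sup' Finset.univ_nonempty fun s => q s z)
        = ∑ z, q (g z) z := Finset.sum_congr rfl fun z _ => hg2 z
      _ ≤ bayesGuessProb q :=
          le_ciSup ⟨_, by rintro y ⟨g', rfl⟩; exact hub g'⟩ g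

lemma baselineProb_eq_sup' {S Z : Type} [Fintype S] [Fintype Z] [Nonempty S]
    (q : S → Z → ℝ) :
    baselineProb q = Finset.univ.sup' Finset.univ_nonempty fun s => ∑ z, q s z := by
  apply le_antisymm
  · exact ciSup_le fun s => Finset.le_sup' (fun s => ∑ z, q s z) (Finset.mem_univ s)
  · obtain ⟨s0, -, hs0⟩ :=
      Finset.exists_mem_eq_sup' Finset.univ_nonempty (fun s => ∑ z, q s z)
    rw [hs0]
    show (∑ z, q s0 z) ≤ ⨆ s : S, ∑ z, q s z
    refine le_ciSup (f := fun s => ∑ z, q s z) ⟨Finset.univ.sup' Finset.univ_nonempty fun s => ∑ z, q s z, ?_⟩ s0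
    rintro y ⟨s, rfl⟩
    exact Finset.le_sup' (fun s => ∑ z, q s z) (Finset.mem_univ s)

/-- existence of a maximally revealing attribute: for X of full support
there is a finite random variable S* with Markov chain S* − X − Z whose Bayes inference
gain equals the maximal leakage L(X → Z) = log₂(∑_z max_x P_{Z|X}(z|x)). -/
theorem exists_maximally_revealing_attribute
    {X Z : Type} [Fintype X] [Fintype Z] [Nonempty X] [Nonempty Z]
    (p : X → Z → ℝ) (hp : IsJointPMF2 p)
    (hsupp : ∀ x, 0 < ∑ z, p x z) :
    ∃ (n : ℕ) (_ : 0 < n) (q : Fin n → X → Z → ℝ),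
      IsJointPMF3 q ∧ MarkovSXZ q ∧ (∀ x z, ∑ s, q s x z = p x z) ∧
      infGain (fun s z => ∑ x, q s x z) = maxLeak p := by
  classical
  obtain ⟨hp1, hp2⟩ := hp
  set pX : X → ℝ := fun x => ∑ z, p x z with hpXdef
  have hpX : ∀ x, 0 < pX x := hsupp
  have hpXne : ∀ x, pX x ≠ 0 := fun x => (hpX x).ne'
  set m : ℝ := Finset.univ.inf' Finset.univ_nonempty pX with hmdef
  have hm0 : 0 < m := by
    rw [hmdef, Finset.lt_inf'_iff]
    exact fun x _ => hpX x
  have hmle : ∀ x, m ≤ pX x := fun x => Finset.inf'_le _ (Finset.mem_univ x)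
  have hsumpX : ∑ x, pX x = 1 := hp2
  have hpX1 : ∀ x, pX x ≤ 1 := by
    intro x
    rw [← hsumpX]
    exact Finset.single_le_sum (fun y _ => (hpX y).le) (Finset.mem_univ x)
  set Kc : ℕ := ⌈1/m⌉₊ with hKcdef
  have hKcR : (0:ℝ) < Kc := by
    have h : 0 < Kc := Nat.ceil_pos.mpr (by positivity)
    exact_mod_cast h
  have hKcm : 1 ≤ (Kc:ℝ) * m := by
    have h1 : (1:ℝ)/m ≤ Kc := Nat.le_ceil _
    calc (1:ℝ) = (1/m) * m := by field_simp
      _ ≤ Kc * m := mul_le_mul_of_nonneg_right h1 hm0.le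
  set c : X → Fin (Kc+1) → ℝ := fun x k => if k = 0 then m / pX x else (1 - m / pX x) / Kc
    with hcdef
  have hc0 : ∀ x, c x 0 = m / pX x := fun x => if_pos rfl
  have hcnonneg : ∀ x k, 0 ≤ c x k := by
    intro x k
    rw [hcdef]
    dsimp only
    split
    · exact div_nonneg hm0.le (hpX x).le
    · have h1 : m / pX x ≤ 1 := (div_le_one (hpX x)).mpr (hmle x)
      have h2 : 0 ≤ 1 - m / pX x := by linarith
      exact div_nonneg h2 hKcR.le
  have hcle : ∀ x k, c x k ≤ m / pX x := by
    intro x k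
    rw [hcdef]
    dsimp only
    split
    · exact le_refl _
    · rw [div_le_iff₀ hKcR]
      have hd : m ≤ m / pX x := by
        rw [le_div_iff₀ (hpX x)]
        nlinarith [hpX1 x, hm0.le]
      have h3 : (Kc:ℝ) * m ≤ (Kc:ℝ) * (m / pX x) := mul_le_mul_of_nonneg_left hd hKcR.le
      have h4 : 0 ≤ m / pX x := div_nonneg hm0.le (hpX x).le
      nlinarith
  have hcsum : ∀ x, ∑ k, c x k = 1 := by
    intro x
    rw [Fin.sum_univ_succ]
    have h1 : ∀ k : Fin Kc, c x k.succ = (1 - m / pX x) / Kc := by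
      intro k
      rw [hcdef]
      exact if_neg (Fin.succ_ne_zero k)
    rw [hc0 x, Finset.sum_congr rfl (fun k _ => h1 k), Finset.sum_const, Finset.card_univ,
      Fintype.card_fin, nsmul_eq_mul]
    field_simp
    ring
  set Q : X × Fin (Kc+1) → X → Z → ℝ :=
    fun s x z => if x = s.1 then c s.1 s.2 * p x z else 0 with hQdef
  have hQnonneg : ∀ s x z, 0 ≤ Q s x z := by
    intro s x z
    rw [hQdef]
    dsimp only
    split
    · exact mul_nonneg (hcnonneg _ _) (hp1 _ _)
    · exact le_refl _
  have hQmar : ∀ x z, ∑ s : X × Fin (Kc+1), Q s x z = p x z := by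
    intro x z
    rw [Fintype.sum_prod_type]
    have h1 : ∀ x', (∑ k, Q (x', k) x z) = if x = x' then p x z else 0 := by
      intro x'
      simp only [hQdef]
      by_cases h : x = x'
      · simp only [h, if_true, ← Finset.sum_mul, hcsum x', one_mul]
      · simp [h]
    rw [Finset.sum_congr rfl (fun x' _ => h1 x')]
    simp
  have hQrow : ∀ (s : X × Fin (Kc+1)) x,
      (∑ z', Q s x z') = if x = s.1 then c s.1 s.2 * pX x else 0 := by
    intro s x
    simp only [hQdef]
    by_cases h : x = s.1
    · simp only [h, if_true, ← Finset.mul_sum]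
      rfl
    · simp [h]
  have hq'val : ∀ (s : X × Fin (Kc+1)) z, (∑ x, Q s x z) = c s.1 s.2 * p s.1 z := by
    intro s z
    simp only [hQdef]
    rw [Finset.sum_ite_eq' Finset.univ s.1 (fun x => c s.1 s.2 * p x z)]
    simp
  haveI : Nonempty (X × Fin (Kc+1)) := ⟨⟨Classical.arbitrary X, 0⟩⟩
  set e := Fintype.equivFin (X × Fin (Kc+1)) with hedef
  set n := Fintype.card (X × Fin (Kc+1)) with hndef
  refine ⟨n, Fintype.card_pos, fun i x z => Q (e.symm i) x z, ?_, ?_, ?_, ?_⟩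
  · constructor
    · intro s x z
      exact hQnonneg _ _ _
    · rw [Equiv.sum_comp e.symm (fun s => ∑ x, ∑ z, Q s x z)]
      rw [Finset.sum_comm]
      have h1 : ∀ x, (∑ s : X × Fin (Kc+1), ∑ z, Q s x z) = ∑ z, p x z := by
        intro x
        rw [Finset.sum_comm]
        exact Finset.sum_congr rfl fun z _ => hQmar x z
      rw [Finset.sum_congr rfl fun x _ => h1 x]
      exact hp2
  · intro i x z
    have hcol : (∑ i', Q (e.symm i') x z) = p x z :=
      (Equiv.sum_comp e.symm (fun s => Q s x z)).trans (hQmar x z)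
    have htot : (∑ i', ∑ z', Q (e.symm i') x z') = pX x := by
      rw [Finset.sum_comm]
      rw [hpXdef]
      refine Finset.sum_congr rfl fun z' _ => ?_
      exact (Equiv.sum_comp e.symm (fun s => Q s x z')).trans (hQmar x z')
    rw [hcol, htot, hQrow]
    by_cases h : x = (e.symm i).1
    · simp only [hQdef, h, if_true]
      ring
    · simp [hQdef, h]
  · intro x z
    exact (Equiv.sum_comp e.symm (fun s => Q s x z)).trans (hQmar x z)
  · -- infGain computation
    haveI : Nonempty (Fin n) := ⟨⟨0, Fintype.card_pos⟩⟩
    set q' : Fin n → Z → ℝ := fun i z => ∑ x, Q (e.symm i) x z with hq'def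
    show infGain q' = maxLeak p
    have hBayes : bayesGuessProb q'
        = m * ∑ z, Finset.univ.sup' Finset.univ_nonempty fun x => p x z / pX x := by
      rw [bayesGuessProb_eq_sum_sup']
      rw [Finset.mul_sum]
      refine Finset.sum_congr rfl fun z _ => ?_
      have h1 : (Finset.univ.sup' Finset.univ_nonempty fun i : Fin n => q' i z)
          = Finset.univ.sup' Finset.univ_nonempty
              fun s : X × Fin (Kc+1) => c s.1 s.2 * p s.1 z := by
        rw [show (fun i : Fin n => q' i z)
            = fun i : Fin n => (fun s : X × Fin (Kc+1) => c s.1 s.2 * p s.1 z) (e.symm i) from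
            funext fun i => hq'val (e.symm i) z]
        exact mySup'_comp_equiv e.symm (fun s : X × Fin (Kc+1) => c s.1 s.2 * p s.1 z)
      rw [h1]
      apply le_antisymm
      · refine Finset.sup'_le _ _ fun s _ => ?_
        have ha : c s.1 s.2 * p s.1 z ≤ (m / pX s.1) * p s.1 z :=
          mul_le_mul_of_nonneg_right (hcle _ _) (hp1 _ _)
        have hb : (m / pX s.1) * p s.1 z = m * (p s.1 z / pX s.1) := by ring
        calc c s.1 s.2 * p s.1 z ≤ m * (p s.1 z / pX s.1) := by rw [← hb]; exact ha
          _ ≤ m * Finset.univ.sup' Finset.univ_nonempty fun x => p x z / pX x :=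
            mul_le_mul_of_nonneg_left
              (Finset.le_sup' (fun x => p x z / pX x) (Finset.mem_univ s.1)) hm0.le
      · obtain ⟨x1, -, hx1⟩ :=
          Finset.exists_mem_eq_sup' Finset.univ_nonempty (fun x => p x z / pX x)
        rw [hx1]
        have hx2 : m * (p x1 z / pX x1) = c x1 0 * p x1 z := by rw [hc0]; ring
        rw [hx2]
        exact Finset.le_sup' (fun s : X × Fin (Kc+1) => c s.1 s.2 * p s.1 z)
          (Finset.mem_univ (x1, 0))
    have hBase : baselineProb q' = m := by
      rw [baselineProb_eq_sup']
      have h1 : (fun i : Fin n => ∑ z, q' i z)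
          = fun i : Fin n => (fun s : X × Fin (Kc+1) => c s.1 s.2 * pX s.1) (e.symm i) := by
        funext i
        calc ∑ z, q' i z
            = ∑ z, c (e.symm i).1 (e.symm i).2 * p (e.symm i).1 z :=
              Finset.sum_congr rfl fun z _ => hq'val (e.symm i) z
          _ = c (e.symm i).1 (e.symm i).2 * pX (e.symm i).1 := by
              rw [← Finset.mul_sum]
      have h2 : (Finset.univ.sup' Finset.univ_nonempty
            fun i : Fin n => (fun s : X × Fin (Kc+1) => c s.1 s.2 * pX s.1) (e.symm i))
          = Finset.univ.sup' Finset.univ_nonempty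
            (fun s : X × Fin (Kc+1) => c s.1 s.2 * pX s.1) :=
        mySup'_comp_equiv e.symm (fun s : X × Fin (Kc+1) => c s.1 s.2 * pX s.1)
      rw [h1, h2]
      apply le_antisymm
      · refine Finset.sup'_le _ _ fun s _ => ?_
        calc c s.1 s.2 * pX s.1 ≤ (m / pX s.1) * pX s.1 :=
            mul_le_mul_of_nonneg_right (hcle _ _) (hpX _).le
          _ = m := div_mul_cancel₀ m (hpXne s.1)
      · obtain ⟨x1⟩ := (inferInstance : Nonempty X)
        have hx2 : m = c x1 0 * pX x1 := by rw [hc0, div_mul_cancel₀ m (hpXne x1)]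
        rw [hx2]
        exact Finset.le_sup' (fun s : X × Fin (Kc+1) => c s.1 s.2 * pX s.1)
          (Finset.mem_univ (x1, 0))
    simp only [infGain, hBayes, hBase, maxLeak, hpXdef]
    rw [mul_div_cancel_left₀ _ hm0.ne']
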